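/- Let H = (H0, H1) be a consistent partial condition over a nonempty finite set T. For each P ∈ H0 let N(P) = ⋃{N ∈ H1 : N ⊆ P}. If P ∖ N(P) ≠ ∅ for every P ∈ H0, then the Rabin condition R = {(T ∖ P, P ∖ N(P)) : P ∈ H0} is consistent with H. -/
import Mathlib

/-- A set `X` satisfies a Rabin condition `R` (a set of pairs `(E, F)`) if
`X ∩ E = ∅` and `X ∩ F ≠ ∅` for some pair `(E, F) ∈ R`. -/
def RabinSat {T : Type*} (R : Set (Set T × Set T)) (X : Set T) : Prop :=
  ∃ p ∈ R, X ∩ p.1 = ∅ ∧ (X ∩ p.2).Nonempty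

/-- Correctness of the constructed Rabin condition.  For a
consistent partial condition `(H0, H1)` over a nonempty finite set `T`, with
`N(P) = ⋃ {N ∈ H1 : N ⊆ P}`, if `P \ N(P) ≠ ∅` for every `P ∈ H0`, then the
Rabin condition `{(T \ P, P \ N(P)) : P ∈ H0}` is consistent with
`(H0, H1)`. -/
theorem rabinCons_correct {T : Type*} [Fintype T] [Nonempty T]
    (H0 H1 : Set (Set T)) (hcons : H0 ∩ H1 = ∅)
    (hFP : ∀ P ∈ H0, (P \ ⋃₀ {N | N ∈ H1 ∧ N ⊆ P}).Nonempty) :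
    (∀ X ∈ H0,
        RabinSat
          ((fun P => (Set.univ \ P, P \ ⋃₀ {N | N ∈ H1 ∧ N ⊆ P})) '' H0) X) ∧
    ∀ X ∈ H1,
        ¬RabinSat
          ((fun P => (Set.univ \ P, P \ ⋃₀ {N | N ∈ H1 ∧ N ⊆ P})) '' H0) X := by
  constructor
  · intro X hX
    refine ⟨_, ⟨X, hX, rfl⟩, ?_, ?_⟩
    · ext x; simp
    · obtain ⟨x, hx⟩ := hFP X hX
      exact ⟨x, hx.1, hx⟩
  · rintro X hX ⟨p, ⟨P, hP, rfl⟩, hE, x, hxX, hxF⟩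
    have hsub : X ⊆ P := by
      intro y hy
      by_contra hyP
      exact absurd hE (by
        intro h
        exact (Set.eq_empty_iff_forall_notMem.mp h y) ⟨hy, Set.mem_univ y, hyP⟩)
    exact hxF.2 ⟨X, ⟨hX, hsub⟩, hxX⟩
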